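/- If S = ė + Γe where Γ is a positive definite matrix, and S(t) → 0 as t → ∞ with e bounded and continuously differentiable, then e(t) → 0 as t → ∞. -/

import Mathlib

/-!
With `r > 0` a lower bound for the spectrum of `Γ`, the Lyapunov function `V = e ⬝ᵥ e` satisfies
`V' = 2 e ⬝ᵥ (S - Γ e) ≤ -r V + (S ⬝ᵥ S) / r`. Once the forcing term is below `r ε / 2`,
Grönwall's inequality with the negative rate `-r` keeps `V` below a bound that decays to `ε / 2`,
so `V → 0`, and hence `e → 0`.
-/

open Filter Topology Matrix

theorem tendsto_gronwallBound_atTop_of_neg (δ ε : ℝ) {K : ℝ} (hK : K < 0) :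
    Tendsto (gronwallBound δ K ε) atTop (𝓝 (-(ε / K))) := by
  rw [gronwallBound_of_K_ne_0 hK.ne]
  have hexp : Tendsto (fun x => Real.exp (K * x)) atTop (𝓝 0) :=
    Real.tendsto_exp_atBot.comp (tendsto_id.const_mul_atTop_of_neg hK)
  simpa using (hexp.const_mul δ).add ((hexp.sub_const 1).const_mul (ε / K))

theorem tendsto_zero_of_hasDerivAt_le_neg_mul_add {f f' g : ℝ → ℝ} {c : ℝ} (hc : 0 < c)
    (hf : ∀ t, HasDerivAt f (f' t) t) (hf' : ∀ t, f' t ≤ -c * f t + g t)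
    (hg : Tendsto g atTop (𝓝 0)) (hf0 : ∀ t, 0 ≤ f t) : Tendsto f atTop (𝓝 0) := by
  refine tendsto_order.2 ⟨fun b hb => .of_forall fun t => hb.trans_le (hf0 t), fun ε hε => ?_⟩
  set δ := c * ε / 2
  obtain ⟨a, ha⟩ := eventually_atTop.1 (hg.eventually (ge_mem_nhds (by positivity : 0 < δ)))
  have hbound : ∀ t ≥ a, f t ≤ gronwallBound (f a) (-c) δ (t - a) := fun t ht =>
    le_gronwallBound_of_liminf_deriv_right_le (fun x _ => (hf x).continuousAt.continuousWithinAt)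
      (fun x _ _ hr => (hf x).hasDerivWithinAt.liminf_right_slope_le hr) le_rfl
      (fun x hx => (hf' x).trans (by linarith [ha x hx.1])) t ⟨ht, le_rfl⟩
  have hlim : Tendsto (fun t => gronwallBound (f a) (-c) δ (t - a)) atTop (𝓝 (ε / 2)) := by
    have h := (tendsto_gronwallBound_atTop_of_neg (f a) δ (neg_lt_zero.2 hc)).comp
      (tendsto_atTop_add_const_right atTop (-a) tendsto_id)
    convert h using 2
    · simp [sub_eq_add_neg]
    · simp only [δ]
      field_simp
  filter_upwards [eventually_ge_atTop a, hlim.eventually (gt_mem_nhds (half_lt_self hε))]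
    with t hat hlt
  exact (hbound t hat).trans_lt hlt

open scoped MatrixOrder in
theorem Matrix.PosDef.exists_pos_mul_dotProduct_self_le {ι : Type*} [Fintype ι]
    {A : Matrix ι ι ℝ} (hA : A.PosDef) :
    ∃ r > 0, ∀ x : ι → ℝ, r * (x ⬝ᵥ x) ≤ x ⬝ᵥ A *ᵥ x := by
  classical
  cases isEmpty_or_nonempty ι
  · exact ⟨1, one_pos, fun x => by simp [dotProduct]⟩
  obtain ⟨r, hr, hrA⟩ := (CFC.exists_pos_algebraMap_le_iff hA.isHermitian.isSelfAdjoint).2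
    fun _ hx => hA.isStrictlyPositive.spectrum_pos hx
  refine ⟨r, hr, fun x => ?_⟩
  have := (le_iff.1 hrA).dotProduct_mulVec_nonneg x
  simpa [sub_mulVec, dotProduct_sub, Algebra.algebraMap_eq_smul_one, smul_mulVec] using this

theorem Matrix.two_mul_dotProduct_sub_mulVec_le {ι : Type*} [Fintype ι] {A : Matrix ι ι ℝ}
    {r : ℝ} (hr : 0 < r) (hA : ∀ x, r * (x ⬝ᵥ x) ≤ x ⬝ᵥ A *ᵥ x) (x s : ι → ℝ) :
    2 * (x ⬝ᵥ (s - A *ᵥ x)) ≤ -r * (x ⬝ᵥ x) + s ⬝ᵥ s / r := by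
  have hyoung : 2 * (x ⬝ᵥ s) - r * (x ⬝ᵥ x) ≤ s ⬝ᵥ s / r := by
    have h := dotProduct_star_self_nonneg (r • x - s)
    simp only [star_trivial, sub_dotProduct, dotProduct_sub, smul_dotProduct, dotProduct_smul,
      smul_eq_mul, dotProduct_comm s x] at h
    rw [le_div_iff₀ hr]
    nlinarith
  rw [dotProduct_sub]
  linarith [hA x]

theorem HasDerivAt.dotProduct {ι : Type*} [Fintype ι] {u v : ℝ → ι → ℝ} {u' v' : ι → ℝ} {t : ℝ}
    (hu : HasDerivAt u u' t) (hv : HasDerivAt v v' t) :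
    HasDerivAt (fun s => u s ⬝ᵥ v s) (u' ⬝ᵥ v t + u t ⬝ᵥ v') t := by
  have h := HasDerivAt.fun_sum (u := Finset.univ)
    fun i _ => (hasDerivAt_pi.1 hu i).fun_mul (hasDerivAt_pi.1 hv i)
  rw [Finset.sum_add_distrib] at h
  exact h

theorem tendsto_nhds_zero_of_dotProduct_self {ι α : Type*} [Fintype ι] {l : Filter α}
    {v : α → ι → ℝ} (h : Tendsto (fun a => v a ⬝ᵥ v a) l (𝓝 0)) : Tendsto v l (𝓝 0) := by
  refine tendsto_pi_nhds.2 fun i => squeeze_zero_norm (fun a => ?_) (by simpa using h.sqrt)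
  refine Real.abs_le_sqrt ?_
  rw [sq]
  exact Finset.single_le_sum (f := fun j => v a j * v a j) (fun j _ => mul_self_nonneg _)
    (Finset.mem_univ i)

theorem filtered_error_convergence_general {n : ℕ}
    (e : ℝ → (Fin n → ℝ)) (Γ : Matrix (Fin n) (Fin n) ℝ)
    (hΓ : Γ.PosDef)
    (he : ContDiff ℝ 1 e)
    (S : ℝ → (Fin n → ℝ))
    (hS : ∀ t, S t = deriv e t + Γ.mulVec (e t))
    (hconv : Filter.Tendsto S Filter.atTop (nhds 0)) :
    Filter.Tendsto e Filter.atTop (nhds 0) := by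
  obtain ⟨r, hr, hΓr⟩ := hΓ.exists_pos_mul_dotProduct_self_le
  have hderiv : ∀ t, HasDerivAt e (S t - Γ *ᵥ e t) t := fun t => by
    rw [hS t, add_sub_cancel_right]
    exact (he.differentiable one_ne_zero t).hasDerivAt
  have hforcing : Tendsto (fun t => S t ⬝ᵥ S t / r) atTop (𝓝 0) := by
    simpa using (((continuous_id.dotProduct continuous_id).tendsto 0).comp hconv).div_const r
  refine tendsto_nhds_zero_of_dotProduct_self <| tendsto_zero_of_hasDerivAt_le_neg_mul_add hr
    (fun t => (hderiv t).dotProduct (hderiv t)) (fun t => ?_) hforcing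
    fun t => by simpa using dotProduct_star_self_nonneg (e t)
  rw [dotProduct_comm (S t - _), ← two_mul]
  exact two_mul_dotProduct_sub_mulVec_le hr hΓr (e t) (S t)

theorem filtered_error_convergence {n : ℕ}
    (e : ℝ → (Fin n → ℝ)) (Γ : Matrix (Fin n) (Fin n) ℝ)
    (hΓ : Γ.PosDef)
    (he : ContDiff ℝ 1 e)
    (hbound : ∃ B, ∀ t, ‖e t‖ ≤ B)
    (S : ℝ → (Fin n → ℝ))
    (hS : ∀ t, S t = deriv e t + Γ.mulVec (e t))
    (hconv : Filter.Tendsto S Filter.atTop (nhds 0)) :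
    Filter.Tendsto e Filter.atTop (nhds 0) :=
  filtered_error_convergence_general e Γ hΓ he S hS hconv
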